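/- Let μ be a finite (possibly complex) measure on ℝ^d and f, g continuous with compact support. Then (μ * μ̃)(f * g̃) = ∫_{ℝ^d} f_μ(x) · conj(g_μ(x)) dx, where f_μ(x) = ∫ f(x+z) dμ(z). -/

import Mathlib

/-! Expanding the convolution, `(μ * μ̃)(f * g̃) = ∬ (f * g̃)(a - b) dμ(a) dμ(b)`, and by
translation invariance of Lebesgue measure `(f * g̃)(a - b) = ∫ f(x + a) conj(g(x + b)) dx`.
The resulting triple integral is absolutely convergent (`f` is bounded, `g` integrable, `μ`
finite), so Fubini lets us integrate over `(a, b)` first, which factors into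
`f_μ(x) · conj(g_μ(x))`. -/

open MeasureTheory Filter Topology
open scoped NNReal ENNReal

/-- Convolution of two measures on `ℝ^d`. -/
noncomputable def mconv {d : ℕ} (μ ν : Measure (EuclideanSpace ℝ (Fin d))) :
    Measure (EuclideanSpace ℝ (Fin d)) :=
  (μ.prod ν).map (fun p => p.1 + p.2)

open ComplexConjugate

section Translation

variable {G 𝕜 : Type*} [AddCommGroup G] [MeasurableSpace G] [RCLike 𝕜]

theorem integral_mul_conj_sub_sub [MeasurableAdd G] (ν : Measure G) [ν.IsAddRightInvariant]
    (f g : G → 𝕜) (a b : G) :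
    ∫ t, f t * conj (g (t - (a - b))) ∂ν = ∫ x, f (x + a) * conj (g (x + b)) ∂ν := by
  rw [← integral_add_right_eq_self _ a]
  congr 1 with x
  congr 3
  abel

theorem stronglyMeasurable_integral_mul_conj_sub [MeasurableSub₂ G] (ν : Measure G) [SFinite ν]
    {f g : G → 𝕜} (hf : StronglyMeasurable f) (hg : StronglyMeasurable g) :
    StronglyMeasurable fun x => ∫ t, f t * conj (g (t - x)) ∂ν :=
  StronglyMeasurable.integral_prod_right (f := fun x t => f t * conj (g (t - x)))
    ((hf.comp_measurable measurable_snd).mul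
      ((hg.comp_measurable (measurable_snd.sub measurable_fst)).star))

variable [MeasurableAdd G] {ν : Measure G} [ν.IsAddRightInvariant] {f g : G → 𝕜} {M : ℝ}

theorem integrable_mul_conj_add_add (hf : StronglyMeasurable f) (hfM : ∀ x, ‖f x‖ ≤ M)
    (hg : Integrable g ν) (a b : G) :
    Integrable (fun x => f (x + a) * conj (g (x + b))) ν :=
  (RCLike.conjCLE.toContinuousLinearMap.integrable_comp (hg.comp_add_right b)).bdd_mul
    (hf.comp_measurable (measurable_add_const a)).aestronglyMeasurable
    (Eventually.of_forall fun _ => hfM _)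

theorem integral_norm_mul_conj_add_add_le (hfM : ∀ x, ‖f x‖ ≤ M) (hg : Integrable g ν)
    (a b : G) :
    ∫ x, ‖f (x + a) * conj (g (x + b))‖ ∂ν ≤ M * ∫ x, ‖g x‖ ∂ν :=
  calc ∫ x, ‖f (x + a) * conj (g (x + b))‖ ∂ν
      ≤ ∫ x, M * ‖g (x + b)‖ ∂ν := by
        refine integral_mono_of_nonneg (Eventually.of_forall fun _ => norm_nonneg _)
          ((hg.comp_add_right b).norm.const_mul M) (Eventually.of_forall fun x => ?_)
        dsimp only
        rw [norm_mul, RCLike.norm_conj]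
        exact mul_le_mul_of_nonneg_right (hfM _) (norm_nonneg _)
    _ = M * ∫ x, ‖g x‖ ∂ν := by
        rw [integral_const_mul, integral_add_right_eq_self (fun x => ‖g x‖) b]

theorem integrable_mul_conj_add_add_prod [MeasurableAdd₂ G] [SFinite ν]
    (μ₁ μ₂ : Measure G) [IsFiniteMeasure μ₁] [IsFiniteMeasure μ₂]
    (hf : StronglyMeasurable f) (hfM : ∀ x, ‖f x‖ ≤ M) (hgm : StronglyMeasurable g)
    (hg : Integrable g ν) :
    Integrable (fun q : (G × G) × G => f (q.2 + q.1.1) * conj (g (q.2 + q.1.2)))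
      ((μ₁.prod μ₂).prod ν) := by
  have hmeas : AEStronglyMeasurable
      (fun q : (G × G) × G => f (q.2 + q.1.1) * conj (g (q.2 + q.1.2)))
      ((μ₁.prod μ₂).prod ν) := by
    refine ((hf.comp_measurable ?_).mul (hgm.comp_measurable ?_).star).aestronglyMeasurable <;>
      fun_prop
  rw [integrable_prod_iff hmeas]
  refine ⟨Eventually.of_forall fun p => integrable_mul_conj_add_add hf hfM hg p.1 p.2,
    (integrable_const (M * ∫ x, ‖g x‖ ∂ν)).mono' hmeas.norm.integral_prod_right'
      (Eventually.of_forall fun p => ?_)⟩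
  rw [Real.norm_of_nonneg (integral_nonneg fun x => norm_nonneg _)]
  exact integral_norm_mul_conj_add_add_le hfM hg p.1 p.2

end Translation

theorem mconv_map_neg {d : ℕ} (μ ν : Measure (EuclideanSpace ℝ (Fin d))) [SFinite μ]
    [SFinite ν] :
    mconv μ (ν.map Neg.neg) = (μ.prod ν).map fun p => p.1 - p.2 := by
  rw [mconv, ← Measure.map_id (μ := μ), Measure.map_prod_map _ _ measurable_id measurable_neg,
    Measure.map_id, Measure.map_map (by fun_prop) (by fun_prop)]
  simp [Function.comp_def, sub_eq_add_neg]

theorem derived_convolution_trick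
    (d : ℕ) (μ : Measure (EuclideanSpace ℝ (Fin d))) [IsFiniteMeasure μ]
    (f g : EuclideanSpace ℝ (Fin d) → ℂ)
    (hfc : Continuous f) (hfs : HasCompactSupport f)
    (hgc : Continuous g) (hgs : HasCompactSupport g) :
    -- `(μ * μ̃)(f * g̃) = ∫ f_μ(x) conj(g_μ(x)) dx`
    (∫ x, (∫ t, f t * (starRingEnd ℂ) (g (t - x)) ∂volume)
        ∂(mconv μ (μ.map Neg.neg)))
      = ∫ x, (∫ z, f (x + z) ∂μ) * (starRingEnd ℂ) (∫ z, g (x + z) ∂μ) ∂volume := by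
  obtain ⟨M, hfM⟩ := hfs.exists_bound_of_continuous hfc
  have hgi : Integrable g := hgc.integrable_of_hasCompactSupport hgs
  calc (∫ x, (∫ t, f t * conj (g (t - x))) ∂(mconv μ (μ.map Neg.neg)))
      = ∫ p, (∫ t, f t * conj (g (t - (p.1 - p.2)))) ∂(μ.prod μ) := by
        rw [mconv_map_neg, integral_map (by fun_prop)
          (stronglyMeasurable_integral_mul_conj_sub volume hfc.stronglyMeasurable
            hgc.stronglyMeasurable).aestronglyMeasurable]
    _ = ∫ p, (∫ x, f (x + p.1) * conj (g (x + p.2))) ∂(μ.prod μ) := by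
        simp only [integral_mul_conj_sub_sub]
    _ = ∫ x, ∫ p, f (x + p.1) * conj (g (x + p.2)) ∂(μ.prod μ) :=
        integral_integral_swap
          (integrable_mul_conj_add_add_prod μ μ hfc.stronglyMeasurable hfM
            hgc.stronglyMeasurable hgi)
    _ = ∫ x, (∫ z, f (x + z) ∂μ) * conj (∫ z, g (x + z) ∂μ) := by
        congr 1 with x
        rw [integral_prod_mul (fun a => f (x + a)) (fun b => conj (g (x + b))), integral_conj]
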